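/- arXiv:1403.6990 — 2 statements merged into one kernel-verified Lean document; each statement's English description precedes it below -/
import Mathlib

section
/- Under the assumptions of the previous two statements, $P(I \leq m \text{ and } Y_I \leq m^2) \geq 1 - (m+2)e^{-\beta m}$ for all natural numbers $m$. -/
/-!
If the sequence has not stopped by time `m`, then the first `m` steps were all increases, which by
the conditional bound `e^{-β}` per step has probability at most `e^{-βm}`. If it has stopped by
time `m` but exceeds `m²`, then one of the first `m` steps was a jump of size at least `m`, each
of which has probability at most `e^{-βm}`. A union bound over these `m + 1` events gives the
claim.
-/

open MeasureTheory Filter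

section CondProb

variable {Ω : Type*} {m m0 : MeasurableSpace Ω} {μ : Measure Ω}

theorem measure_inter_le_of_condExp_indicator_le [IsFiniteMeasure μ] (hm : m ≤ m0)
    {S T : Set Ω} (hS : MeasurableSet[m] S) (hT : MeasurableSet T) {c : ℝ} (hc : 0 ≤ c)
    (hbound : ∀ᵐ ω ∂μ, μ[T.indicator (fun _ => (1 : ℝ)) | m] ω ≤ c) :
    μ (S ∩ T) ≤ ENNReal.ofReal c * μ S := by
  have hint : Integrable (T.indicator fun _ => (1 : ℝ)) μ := (integrable_const 1).indicator hT
  have hreal : μ.real (S ∩ T) ≤ c * μ.real S := calc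
    μ.real (S ∩ T) = ∫ ω in S, T.indicator (fun _ => (1 : ℝ)) ω ∂μ := by
      rw [integral_indicator hT, setIntegral_const, measureReal_restrict_apply hT, Set.inter_comm,
        smul_eq_mul, mul_one]
    _ = ∫ ω in S, μ[T.indicator (fun _ => (1 : ℝ)) | m] ω ∂μ :=
      (setIntegral_condExp hm hint hS).symm
    _ ≤ ∫ _ in S, c ∂μ := setIntegral_mono_ae integrable_condExp.integrableOn
      (integrable_const c).integrableOn hbound
    _ = c * μ.real S := by rw [setIntegral_const, smul_eq_mul, mul_comm]
  rw [← ofReal_measureReal, ← ofReal_measureReal, ← ENNReal.ofReal_mul hc]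
  exact ENNReal.ofReal_le_ofReal hreal

theorem measure_biInter_lt_le_pow [IsProbabilityMeasure μ] (ℱ : Filtration ℕ m0)
    {T : ℕ → Set Ω} (hT : ∀ i, MeasurableSet[ℱ (i + 1)] (T i)) {c : ℝ} (hc : 0 ≤ c)
    (hbound : ∀ i, ∀ᵐ ω ∂μ, μ[(T i).indicator (fun _ => (1 : ℝ)) | ℱ i] ω ≤ c) (k : ℕ) :
    μ (⋂ i < k, T i) ≤ ENNReal.ofReal c ^ k := by
  induction k with
  | zero => simp
  | succ k ih =>
    have hmeas : MeasurableSet[ℱ k] (⋂ i < k, T i) :=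
      MeasurableSet.iInter fun i => MeasurableSet.iInter fun hi => ℱ.mono hi _ (hT i)
    calc μ (⋂ i < k + 1, T i) = μ ((⋂ i < k, T i) ∩ T k) := by rw [Set.biInter_lt_succ]
      _ ≤ ENNReal.ofReal c * μ (⋂ i < k, T i) :=
        measure_inter_le_of_condExp_indicator_le (ℱ.le k) hmeas (ℱ.le (k + 1) _ (hT k)) hc
          (hbound k)
      _ ≤ ENNReal.ofReal c ^ (k + 1) := by rw [pow_succ']; gcongr

theorem measure_union_biUnion_range_le {A : Set Ω} {B : ℕ → Set Ω} {e : ℝ}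
    (hA : μ A ≤ ENNReal.ofReal e) (hB : ∀ j, μ (B j) ≤ ENNReal.ofReal e) (n : ℕ) :
    μ (A ∪ ⋃ j ∈ Finset.range n, B j) ≤ ENNReal.ofReal ((n + 1) * e) := calc
  _ ≤ μ A + ∑ j ∈ Finset.range n, μ (B j) :=
    (measure_union_le _ _).trans (add_le_add_right (measure_biUnion_finset_le _ _) _)
  _ ≤ ENNReal.ofReal e + n * ENNReal.ofReal e := by
    grw [hA, Finset.sum_le_sum fun j _ => hB j, Finset.sum_const, Finset.card_range, nsmul_eq_mul]
  _ = ENNReal.ofReal ((n + 1) * e) := by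
    rw [ENNReal.ofReal_mul (by positivity), ENNReal.ofReal_add n.cast_nonneg zero_le_one,
      ENNReal.ofReal_natCast, ENNReal.ofReal_one]
    ring

end CondProb

section Paths

variable {y : ℕ → ℕ}

theorem le_of_eq_succ_of_sticky (hy : Monotone y)
    (hstick : ∀ i, y i = y (i + 1) → ∀ j, i ≤ j → y j = y (j + 1))
    {i : ℕ} (hi : y i = y (i + 1)) (k : ℕ) : y k ≤ y i := by
  rcases le_total k i with hki | hik
  · exact hy hki
  · refine le_of_eq ?_
    induction k, hik using Nat.le_induction with
    | base => rfl
    | succ j hij ih => exact (hstick i hi j hij).symm.trans ih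

theorem le_mul_of_forall_lt_succ_le_add {d n : ℕ} (h0 : y 0 = 0)
    (hstep : ∀ j < n, y (j + 1) ≤ y j + d) : y n ≤ n * d := by
  induction n with
  | zero => simp [h0]
  | succ n ih =>
    rw [Nat.succ_mul]
    exact (hstep n n.lt_succ_self).trans
      (Nat.add_le_add_right (ih fun j hj => hstep j (hj.trans n.lt_succ_self)) d)

theorem stops_and_le_sq_or_increasing_or_jump (hy : Monotone y) (h0 : y 0 = 0)
    (hstick : ∀ i, y i = y (i + 1) → ∀ j, i ≤ j → y j = y (j + 1)) (m : ℕ) :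
    ((∃ i ≤ m, y i = y (i + 1)) ∧ ∀ k, y k ≤ m ^ 2) ∨
      (∀ i < m, y i < y (i + 1)) ∨ ∃ j < m, y j + m ≤ y (j + 1) := by
  by_cases hstop : ∃ i ≤ m, y i = y (i + 1)
  · by_cases hjump : ∃ j < m, y j + m ≤ y (j + 1)
    · exact Or.inr (Or.inr hjump)
    push Not at hjump
    obtain ⟨i, him, hi⟩ := hstop
    refine Or.inl ⟨⟨i, him, hi⟩, fun k => ?_⟩
    calc y k ≤ y i := le_of_eq_succ_of_sticky hy hstick hi k
      _ ≤ i * m := le_mul_of_forall_lt_succ_le_add h0 fun j hj => (hjump j (hj.trans_le him)).le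
      _ ≤ m ^ 2 := by rw [sq]; exact Nat.mul_le_mul_right m him
  · push Not at hstop
    exact Or.inr (Or.inl fun i hi => (hy i.le_succ).lt_of_ne (hstop i hi.le))

end Paths

theorem stmt2_general {Ω : Type*} {m0 : MeasurableSpace Ω} (P : Measure Ω) [IsProbabilityMeasure P]
    (ℱ : Filtration ℕ m0) (Y : ℕ → Ω → ℕ) (β : ℝ)
    (hadapt : ∀ i, Measurable[ℱ i] (Y i))
    (hY0 : ∀ ω, Y 0 ω = 0)
    (hmono : ∀ i, ∀ᵐ ω ∂P, Y i ω ≤ Y (i + 1) ω)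
    (hcond : ∀ i, ∀ᵐ ω ∂P,
      (P[Set.indicator {ω' | Y i ω' < Y (i + 1) ω'} (fun _ => (1 : ℝ)) | ℱ i]) ω
        ≤ Real.exp (-β))
    (htail : ∀ j m, ∀ᵐ ω ∂P,
      (P[Set.indicator {ω' | Y j ω' + m ≤ Y (j + 1) ω'} (fun _ => (1 : ℝ)) | ℱ j]) ω
        ≤ Real.exp (-β * m))
    (hstick : ∀ ω i, Y i ω = Y (i + 1) ω → ∀ j, i ≤ j → Y j ω = Y (j + 1) ω)
    (m : ℕ) :
    1 - ENNReal.ofReal ((m + 2) * Real.exp (-β * m))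
      ≤ P {ω | (∃ i ≤ m, Y i ω = Y (i + 1) ω) ∧ ∀ i, Y i ω ≤ m ^ 2} := by
  set good := {ω | (∃ i ≤ m, Y i ω = Y (i + 1) ω) ∧ ∀ i, Y i ω ≤ m ^ 2}
  set ε := ENNReal.ofReal (Real.exp (-β * m))
  have hY : ∀ i, Measurable[ℱ (i + 1)] (Y i) := fun i => (hadapt i).mono (ℱ.mono i.le_succ) le_rfl
  have hincr : P (⋂ i < m, {ω | Y i ω < Y (i + 1) ω}) ≤ ε := calc
    _ ≤ ENNReal.ofReal (Real.exp (-β)) ^ m := measure_biInter_lt_le_pow ℱ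
        (fun i => measurableSet_lt (hY i) (hadapt (i + 1))) (Real.exp_nonneg _) hcond m
    _ = ε := by
      rw [← ENNReal.ofReal_pow (Real.exp_nonneg _), ← Real.exp_nat_mul, mul_comm]
  have hjump : ∀ j, P {ω | Y j ω + m ≤ Y (j + 1) ω} ≤ ε := fun j => by
    simpa [ε] using measure_inter_le_of_condExp_indicator_le (ℱ.le j) MeasurableSet.univ
      (ℱ.le (j + 1) _ (measurableSet_le ((hY j).add_const m) (hadapt (j + 1))))
      (Real.exp_nonneg _) (htail j m)
  have hbad : goodᶜ ≤ᵐ[P] ((⋂ i < m, {ω | Y i ω < Y (i + 1) ω}) ∪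
      ⋃ j ∈ Finset.range m, {ω | Y j ω + m ≤ Y (j + 1) ω} : Set Ω) := by
    filter_upwards [ae_all_iff.2 hmono] with ω hω hgood
    rcases stops_and_le_sq_or_increasing_or_jump (monotone_nat_of_le_succ hω) (hY0 ω)
      (hstick ω) m with h | h | h
    · exact absurd h hgood
    · left; simpa using h
    · right; simpa using h
  calc 1 - ENNReal.ofReal ((m + 2) * Real.exp (-β * m))
      ≤ 1 - ENNReal.ofReal ((m + 1) * Real.exp (-β * m)) := by gcongr; norm_num
    _ ≤ 1 - P goodᶜ :=
      tsub_le_tsub_left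
        ((measure_mono_ae hbad).trans (measure_union_biUnion_range_le hincr hjump m)) 1
    _ ≤ P good := tsub_le_iff_right.2 (by simpa using measure_univ_le_add_compl (μ := P) good)

/-- under the hypotheses of Statements 0 and 1,
`P (I ≤ m ∧ Y_I ≤ m²) ≥ 1 - (m+2) exp (-β m)`.  Here `I ≤ m` is expressed as
`∃ i ≤ m, Y i ω = Y (i+1) ω`, and (the sequence being nondecreasing and eventually
constant) `Y_I ≤ m²` is expressed as `∀ i, Y i ω ≤ m²`. -/
theorem stmt2 {Ω : Type*} {m0 : MeasurableSpace Ω} (P : Measure Ω) [IsProbabilityMeasure P]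
    (ℱ : Filtration ℕ m0) (Y : ℕ → Ω → ℕ) (β : ℝ) (hβ : 0 < β)
    (hadapt : ∀ i, Measurable[ℱ i] (Y i))
    (hY0 : ∀ ω, Y 0 ω = 0)
    (hmono : ∀ i, ∀ᵐ ω ∂P, Y i ω ≤ Y (i + 1) ω)
    (hcond : ∀ i, ∀ᵐ ω ∂P,
      (P[Set.indicator {ω' | Y i ω' < Y (i + 1) ω'} (fun _ => (1 : ℝ)) | ℱ i]) ω
        ≤ Real.exp (-β))
    (htail : ∀ j m, ∀ᵐ ω ∂P,
      (P[Set.indicator {ω' | Y j ω' + m ≤ Y (j + 1) ω'} (fun _ => (1 : ℝ)) | ℱ j]) ω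
        ≤ Real.exp (-β * m))
    (hstick : ∀ ω i, Y i ω = Y (i + 1) ω → ∀ j, i ≤ j → Y j ω = Y (j + 1) ω)
    (hfin : ∀ᵐ ω ∂P, ∃ i, Y i ω = Y (i + 1) ω)
    (m : ℕ) :
    1 - ENNReal.ofReal ((m + 2) * Real.exp (-β * m))
      ≤ P {ω | (∃ i ≤ m, Y i ω = Y (i + 1) ω) ∧ ∀ i, Y i ω ≤ m ^ 2} :=
  stmt2_general P ℱ Y β hadapt hY0 hmono hcond htail hstick m
end

section
/- For oriented percolation on $\Lambda$ with $p<p_c$ (so that $P(\xi^{\{x\}}_n\neq\emptyset)\leq e^{-\beta n}$), let $f$ be a bounded cylinder function on subsets of $2\mathbb{Z}_-$ depending only on coordinates $-2r,\dots,-2$. Then for any subset $A'$ of $2\mathbb{Z}_-$ containing $0$, $\left|E\big(f(\zeta^{A'}_n)\,\big|\,0\to L_n\big) - E\big(f(\zeta^{0}_n)\,\big|\,0\to L_n\big)\right| \leq 2(n+r)\|f\|e^{-\beta n}$ for all $n$. -/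
/-!
Seen from their rightmost points, `ξ^{A'}_n` and `ξ^0_n` can only differ on the window
`[-2r, -2]` if some site of `ξ^{A'}_n \ ξ^0_n` lies within `2r` of the rightmost point of
`ξ^0_n`. On `{0 → L_n}` that site is reached by an open path which avoids the cluster of the
origin and starts at some `-2i` with `1 ≤ i ≤ n + r`. The cluster is a stopping set: given that
it equals `K`, the survival of `-2i` off `K` only uses bonds leaving sites outside `K`, so it is
independent of the cluster and has probability at most `P(ξ^{-2i}_n ≠ ∅) ≤ e^{-βn}`. A union
bound over `i` and `|f| ≤ ‖f‖` give the estimate. For the same reason only the sites of `A'` in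
`[-2(n + r), 0]` matter on `{0 → L_n}`, so `f(ζ^{A'}_n)` may be replaced there by a function of
finitely many bonds, which is measurable.
-/

open MeasureTheory ProbabilityTheory

/-- A site of the plane: `(horizontal coordinate, level)`. -/
abbrev Site : Type := ℤ × ℤ

/-- An oriented bond is determined by its bottom site and a direction
(`true` = up-right, `false` = up-left). -/
abbrev Bond : Type := Site × Bool

/-- A percolation configuration: each bond is open (`true`) or closed (`false`). -/
abbrev Config : Type := Bond → Bool

/-- The top endpoint of the bond starting at `s` with direction `d`. -/
def bondStep (s : Site) (d : Bool) : Site := (s.1 + (if d then 1 else -1), s.2 + 1)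

/-- There is an open oriented path from `a` to `b` in the configuration `ω`. -/
def OpenPath (ω : Config) (a b : Site) : Prop :=
  ∃ (k : ℕ) (γ : ℕ → Site), γ 0 = a ∧ γ k = b ∧
    ∀ i < k, ∃ d : Bool, bondStep (γ i) d = γ (i + 1) ∧ ω (γ i, d) = true

/-- The bond variables are i.i.d. Bernoulli(p) under `P`. -/
def IIDBernoulli (P : Measure Config) (p : ℝ) : Prop :=
  (∀ b : Bond, P {ω : Config | ω b = true} = ENNReal.ofReal p) ∧
    iIndepFun (fun (b : Bond) (ω : Config) => ω b) P


/-- The set of sites at level `n` reachable from `A × {0}` by open oriented paths. -/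
def xi (ω : Config) (A : Set ℤ) (n : ℕ) : Set ℤ :=
  {y : ℤ | ∃ x ∈ A, OpenPath ω (x, 0) (y, (n : ℤ))}

/-- The configuration at level `n` seen from its rightmost point. -/
noncomputable def zeta (ω : Config) (A : Set ℤ) (n : ℕ) : Set ℤ :=
  (fun z => z - sSup (xi ω A n)) '' xi ω A n

section FiniteDependence

variable {ι α : Type*}

lemma dependsOn_mem_of_imp {E : Set (ι → α)} {s : Set ι}
    (h : ∀ ⦃x y : ι → α⦄, (∀ i ∈ s, x i = y i) → x ∈ E → y ∈ E) :
    DependsOn (· ∈ E) s :=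
  fun _ _ hxy => propext ⟨h hxy, h fun i hi => (hxy i hi).symm⟩

lemma eq_preimage_restrict_image_of_dependsOn {E : Set (ι → α)} {s : Finset ι}
    (hE : DependsOn (· ∈ E) s) : E = s.restrict ⁻¹' (s.restrict '' E) := by
  refine Set.Subset.antisymm (fun x hx => ⟨x, hx, rfl⟩) ?_
  rintro x ⟨y, hy, hyx⟩
  have hxy : (y ∈ E) = (x ∈ E) := hE fun i hi => congrFun hyx ⟨i, hi⟩
  exact hxy ▸ hy

variable [MeasurableSpace α] [Countable α] [MeasurableSingletonClass α]

lemma measurableSet_of_dependsOn {E : Set (ι → α)} {s : Finset ι}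
    (hE : DependsOn (· ∈ E) s) : MeasurableSet E := by
  rw [eq_preimage_restrict_image_of_dependsOn hE]
  exact s.measurable_restrict (Set.to_countable _).measurableSet

lemma DependsOn.measurable {β : Type*} [MeasurableSpace β] {f : (ι → α) → β} {s : Finset ι}
    (hf : DependsOn f s) : Measurable f :=
  fun t _ => measurableSet_of_dependsOn fun x y h => by
    change (f x ∈ t) = (f y ∈ t)
    rw [hf h]

lemma measure_inter_eq_mul_of_dependsOn {P : Measure (ι → α)}
    (hP : iIndepFun (fun i ω => ω i) P) {s t : Finset ι} (hst : Disjoint s t)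
    {E F : Set (ι → α)} (hE : DependsOn (· ∈ E) s) (hF : DependsOn (· ∈ F) t) :
    P (E ∩ F) = P E * P F := by
  rw [eq_preimage_restrict_image_of_dependsOn hE, eq_preimage_restrict_image_of_dependsOn hF]
  exact (hP.indepFun_finset s t hst measurable_pi_apply).measure_inter_preimage_eq_mul _ _
    (Set.to_countable _).measurableSet (Set.to_countable _).measurableSet

end FiniteDependence

lemma image_sub_csSup_inter_Ici_eq {S T : Set ℤ} (hST : S ⊆ T) (hS : S.Nonempty)
    (hT : BddAbove T) {m : ℤ} (hm : 0 ≤ m) (htop : ∀ y ∈ T, sSup S - m ≤ y → y ∈ S) :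
    (· - sSup T) '' T ∩ Set.Ici (-m) = (· - sSup S) '' S ∩ Set.Ici (-m) := by
  have hle : sSup S ≤ sSup T := csSup_le_csSup hT hS hST
  have hsup : sSup T = sSup S :=
    le_antisymm (le_csSup (hT.mono hST)
      (htop _ (Int.csSup_mem (hS.mono hST) hT) (by linarith))) hle
  ext z
  simp only [Set.mem_inter_iff, Set.mem_image, Set.mem_Ici, hsup]
  constructor
  · rintro ⟨⟨y, hy, rfl⟩, hz⟩
    exact ⟨⟨y, htop y hy (by linarith), rfl⟩, hz⟩
  · rintro ⟨⟨y, hy, rfl⟩, hz⟩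
    exact ⟨⟨y, hST hy, rfl⟩, hz⟩

lemma abs_integral_sub_integral_le {Ω : Type*} [MeasurableSpace Ω] {μ : Measure Ω}
    [IsFiniteMeasure μ] {f g : Ω → ℝ} (hf : Measurable f) (hg : Measurable g) {M : ℝ}
    (hfM : ∀ ω, |f ω| ≤ M) (hgM : ∀ ω, |g ω| ≤ M) :
    |∫ ω, f ω ∂μ - ∫ ω, g ω ∂μ| ≤ 2 * M * μ.real {ω | f ω ≠ g ω} := by
  have hint {h : Ω → ℝ} (hh : Measurable h) (hhM : ∀ ω, |h ω| ≤ M) : Integrable h μ :=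
    .of_bound hh.aestronglyMeasurable M (ae_of_all _ fun ω => by simpa using hhM ω)
  rw [← integral_sub (hint hf hfM) (hint hg hgM), ← setIntegral_eq_integral_of_forall_compl_eq_zero
    (s := {ω | f ω ≠ g ω}) fun ω hω => by simpa [sub_eq_zero] using hω, ← Real.norm_eq_abs]
  refine norm_setIntegral_le_of_norm_le_const (measure_lt_top _ _) fun ω _ => ?_
  rw [Real.norm_eq_abs]
  linarith [abs_sub (f ω) (g ω), hfM ω, hgM ω]

def OpenStep (ω : Config) (s t : Site) : Prop :=
  ∃ d : Bool, bondStep s d = t ∧ ω (s, d) = true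

lemma openPath_iff_reflTransGen {ω : Config} {a b : Site} :
    OpenPath ω a b ↔ Relation.ReflTransGen (OpenStep ω) a b := by
  constructor
  · rintro ⟨k, γ, rfl, rfl, hγ⟩
    exact (reflTransGen_of_succ_of_le (fun i j => OpenStep ω (γ i) (γ j))
      (fun i hi => hγ i hi.2) k.zero_le).lift γ fun _ _ h => h
  · intro h
    induction h with
    | refl => exact ⟨0, fun _ => a, rfl, rfl, fun i hi => absurd hi i.not_lt_zero⟩
    | @tail c b _ hcb ih =>
      obtain ⟨k, γ, h0, hk, hγ⟩ := ih
      refine ⟨k + 1, Function.update γ (k + 1) b, by simp [h0], by simp, fun i hi => ?_⟩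
      rcases Nat.lt_succ_iff_lt_or_eq.1 hi with hi | rfl
      · rw [Function.update_of_ne (by omega), Function.update_of_ne (by omega)]
        exact hγ i hi
      · rwa [Function.update_of_ne (by omega), Function.update_self, hk]

namespace OpenPath

variable {ω ω' : Config} {a b c : Site}

lemma refl : OpenPath ω a a := openPath_iff_reflTransGen.2 .refl

lemma trans (hab : OpenPath ω a b) (hbc : OpenPath ω b c) : OpenPath ω a c := by
  rw [openPath_iff_reflTransGen] at *
  exact hab.trans hbc

lemma head (hab : OpenStep ω a b) (hbc : OpenPath ω b c) : OpenPath ω a c := by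
  rw [openPath_iff_reflTransGen] at *
  exact hbc.head hab

lemma abs_fst_sub_le (h : OpenPath ω a b) : |b.1 - a.1| ≤ b.2 - a.2 := by
  rw [openPath_iff_reflTransGen] at h
  induction h with
  | refl => simp
  | tail _ hcb ih =>
    obtain ⟨d, rfl, -⟩ := hcb
    rw [abs_le] at ih ⊢
    cases d <;> simp only [bondStep] <;> constructor <;> omega

lemma abs_sub_le {x y l : ℤ} (h : OpenPath ω (x, 0) (y, l)) : |y - x| ≤ l := by
  simpa using h.abs_fst_sub_le

/-- `h` may also use reachability in the target configuration `ω'`: the stopping-set property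
of the cluster (`cluster_eq_of_eqOn`) needs it. -/
lemma transfer {m : ℤ}
    (h : ∀ c d, OpenPath ω a c → OpenPath ω' a c → c.2 < m → ω (c, d) = true →
      ω' (c, d) = true)
    (hab : OpenPath ω a b) (hb : b.2 ≤ m) : OpenPath ω' a b := by
  rw [openPath_iff_reflTransGen] at hab
  induction hab with
  | refl => exact refl
  | @tail c b hac hcb ih =>
    obtain ⟨d, rfl, hd⟩ := hcb
    have hcm : c.2 < m := by simp only [bondStep] at hb; omega
    have hc' := ih hcm.le
    rw [openPath_iff_reflTransGen] at hc' ⊢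
    exact hc'.tail ⟨d, rfl, h c d (openPath_iff_reflTransGen.2 hac)
      (openPath_iff_reflTransGen.2 hc') hcm hd⟩

end OpenPath

noncomputable def box (lo hi : ℤ) (n : ℕ) : Finset Site :=
  Finset.Icc lo hi ×ˢ Finset.Icc 0 (n : ℤ)

def bondsAt (K : Finset Site) : Finset Bond := K ×ˢ Finset.univ

@[simp] lemma mem_bondsAt {K : Finset Site} {b : Bond} : b ∈ bondsAt K ↔ b.1 ∈ K := by
  simp [bondsAt]

lemma box_subset_box {lo lo' hi hi' : ℤ} (hlo : lo' ≤ lo) (hhi : hi ≤ hi') (n : ℕ) :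
    box lo hi n ⊆ box lo' hi' n :=
  Finset.product_subset_product_left (Finset.Icc_subset_Icc hlo hhi)

lemma mem_box_of_openPath {ω : Config} {x : ℤ} {c : Site} {n : ℕ} (h : OpenPath ω (x, 0) c)
    (hc : c.2 ≤ n) : c ∈ box (x - n) (x + n) n := by
  obtain ⟨h₁, h₂⟩ := abs_le.1 h.abs_fst_sub_le
  simp only [box, Finset.mem_product, Finset.mem_Icc]
  omega

lemma openPath_of_eqOn_box {ω ω' : Config} {x : ℤ} {n : ℕ} {b : Site}
    (h : ∀ i ∈ bondsAt (box (x - n) (x + n) n), ω i = ω' i) (hab : OpenPath ω (x, 0) b)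
    (hb : b.2 ≤ n) : OpenPath ω' (x, 0) b :=
  hab.transfer (fun c d hc _ hcm hd =>
    h (c, d) (mem_bondsAt.2 (mem_box_of_openPath hc hcm.le)) ▸ hd) hb

def survivalEvent (x : ℤ) (n : ℕ) : Set Config := {ω | ∃ y : ℤ, OpenPath ω (x, 0) (y, n)}

lemma dependsOn_mem_survivalEvent (x : ℤ) (n : ℕ) :
    DependsOn (· ∈ survivalEvent x n) (bondsAt (box (x - n) (x + n) n) : Set Bond) :=
  dependsOn_mem_of_imp fun _ _ h ⟨y, hy⟩ => ⟨y, openPath_of_eqOn_box h hy le_rfl⟩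

lemma measurableSet_survivalEvent (x : ℤ) (n : ℕ) : MeasurableSet (survivalEvent x n) :=
  measurableSet_of_dependsOn (dependsOn_mem_survivalEvent x n)

lemma xi_mono {ω : Config} {A B : Set ℤ} (hAB : A ⊆ B) (n : ℕ) : xi ω A n ⊆ xi ω B n :=
  fun _ ⟨x, hx, hxy⟩ => ⟨x, hAB hx, hxy⟩

lemma bddAbove_xi (ω : Config) {A : Set ℤ} (hA : ∀ x ∈ A, x ≤ 0) (n : ℕ) :
    BddAbove (xi ω A n) := by
  refine ⟨n, ?_⟩
  rintro y ⟨x, hx, hxy⟩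
  linarith [(abs_le.1 hxy.abs_sub_le).2, hA x hx]

lemma dependsOn_xi {A : Set ℤ} {lo : ℤ} (hA : A ⊆ Set.Icc lo 0) (n : ℕ) :
    DependsOn (xi · A n) (bondsAt (box (lo - n) n n) : Set Bond) := by
  have key : ∀ {ω ω' : Config}, (∀ i ∈ bondsAt (box (lo - n) n n), ω i = ω' i) →
      xi ω A n ⊆ xi ω' A n := by
    rintro ω ω' h y ⟨x, hx, hxy⟩
    have hbox : box (x - n) (x + n) n ⊆ box (lo - n) n n :=
      box_subset_box (by linarith [(hA hx).1]) (by linarith [(hA hx).2]) n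
    refine ⟨x, hx, openPath_of_eqOn_box (fun i hi => h i ?_) hxy le_rfl⟩
    exact mem_bondsAt.2 (hbox (mem_bondsAt.1 hi))
  exact fun ω ω' h => (key h).antisymm (key fun i hi => (h i hi).symm)

lemma measurable_comp_zeta {A : Set ℤ} {lo : ℤ} (hA : A ⊆ Set.Icc lo 0) (n : ℕ)
    (g : Set ℤ → ℝ) : Measurable fun ω => g (zeta ω A n) :=
  DependsOn.measurable (s := bondsAt (box (lo - n) n n)) fun _ _ h => by
    simp only [zeta, dependsOn_xi hA n h]

open scoped Classical in
noncomputable def cluster (ω : Config) (n : ℕ) : Finset Site :=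
  (box (-n) n n).filter fun s => OpenPath ω (0, 0) s ∧ s.2 ≤ n

lemma mem_cluster {ω : Config} {n : ℕ} {s : Site} :
    s ∈ cluster ω n ↔ OpenPath ω (0, 0) s ∧ s.2 ≤ n := by
  simp only [cluster, Finset.mem_filter, and_iff_right_iff_imp]
  exact fun h => by simpa using mem_box_of_openPath h.1 h.2

lemma cluster_mem_powerset (ω : Config) (n : ℕ) : cluster ω n ∈ (box (-n) n n).powerset := by
  classical exact Finset.mem_powerset.2 (Finset.filter_subset _ _)

lemma cluster_eq_of_eqOn {ω ω' : Config} {n : ℕ} {K : Finset Site} (hK : cluster ω n = K)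
    (h : ∀ i ∈ bondsAt K, ω i = ω' i) : cluster ω' n = K := by
  subst hK
  ext s
  simp only [mem_cluster]
  refine ⟨fun ⟨hs, hsn⟩ => ⟨hs.transfer (fun c d _ hc hcn hd => ?_) hsn, hsn⟩,
    fun ⟨hs, hsn⟩ => ⟨hs.transfer (fun c d hc _ hcn hd => ?_) hsn, hsn⟩⟩
  · exact (h (c, d) (mem_bondsAt.2 (mem_cluster.2 ⟨hc, hcn.le⟩))).trans hd
  · exact (h (c, d) (mem_bondsAt.2 (mem_cluster.2 ⟨hc, hcn.le⟩))).symm.trans hd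

lemma measurableSet_cluster_preimage (n : ℕ) (K : Finset Site) :
    MeasurableSet ((cluster · n) ⁻¹' {K}) :=
  measurableSet_of_dependsOn (s := bondsAt K) <|
    dependsOn_mem_of_imp fun _ _ h hK => cluster_eq_of_eqOn hK h

lemma mem_survivalEvent_zero_iff {ω : Config} {n : ℕ} :
    ω ∈ survivalEvent 0 n ↔ ∃ s ∈ cluster ω n, s.2 = n := by
  constructor
  · rintro ⟨y, hy⟩
    exact ⟨(y, n), mem_cluster.2 ⟨hy, le_rfl⟩, rfl⟩
  · rintro ⟨⟨y, _⟩, hs, rfl⟩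
    exact ⟨y, (mem_cluster.1 hs).1⟩

lemma dependsOn_mem_cluster_preimage_inter_survivalEvent (n : ℕ) (K : Finset Site) :
    DependsOn (· ∈ (cluster · n) ⁻¹' {K} ∩ survivalEvent 0 n) (bondsAt K : Set Bond) := by
  refine dependsOn_mem_of_imp fun ω ω' h ⟨(hK : cluster ω n = K), hC⟩ => ?_
  have hK' := cluster_eq_of_eqOn hK h
  rw [mem_survivalEvent_zero_iff, hK] at hC
  exact ⟨hK', mem_survivalEvent_zero_iff.2 (hK' ▸ hC)⟩

def closeOn (K : Finset Site) (ω : Config) : Config := fun b => ω b && decide (b.1 ∉ K)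

lemma OpenPath.of_closeOn {ω : Config} {K : Finset Site} {a b : Site}
    (h : OpenPath (closeOn K ω) a b) : OpenPath ω a b :=
  h.transfer (fun _ _ _ _ _ hd => by simp_all [closeOn]) le_rfl

lemma OpenPath.closeOn_or_exists_mem {ω : Config} {a b : Site} (h : OpenPath ω a b)
    (K : Finset Site) : OpenPath (closeOn K ω) a b ∨ ∃ c ∈ K, OpenPath ω c b := by
  rw [openPath_iff_reflTransGen] at h
  induction h using Relation.ReflTransGen.head_induction_on with
  | refl => exact .inl .refl
  | @head a c hac hcb ih =>
    by_cases ha : a ∈ K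
    · exact .inr ⟨a, ha, .head hac (openPath_iff_reflTransGen.2 hcb)⟩
    · obtain ⟨d, rfl, hd⟩ := hac
      exact ih.imp_left (.head ⟨d, rfl, by simp [closeOn, hd, ha]⟩)

lemma dependsOn_mem_closeOn_preimage {E : Set Config} {B : Finset Site}
    (hE : DependsOn (· ∈ E) (bondsAt B : Set Bond)) (K : Finset Site) :
    DependsOn (· ∈ closeOn K ⁻¹' E) (bondsAt (B \ K) : Set Bond) := by
  refine fun ω ω' h => hE fun i hi => ?_
  by_cases hK : i.1 ∈ K
  · simp [closeOn, hK]
  · simp only [closeOn, h i (by simp_all)]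

def offClusterSurvival (x : ℤ) (n : ℕ) : Set Config :=
  {ω | closeOn (cluster ω n) ω ∈ survivalEvent x n}

/-- Split according to the value `K` of the cluster: off `K`, the survival of `x` only uses
bonds leaving sites outside `K`, independent of the event that the cluster is `K`. -/
lemma measure_survivalEvent_inter_offClusterSurvival_le {P : Measure Config}
    (hP : iIndepFun (fun (b : Bond) (ω : Config) => ω b) P) (x : ℤ) (n : ℕ) :
    P (survivalEvent 0 n ∩ offClusterSurvival x n) ≤
      P (survivalEvent 0 n) * P (survivalEvent x n) := by
  set C := survivalEvent 0 n
  set 𝒦 := (box (-n) n n).powerset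
  have hcover : C ∩ offClusterSurvival x n ⊆
      ⋃ K ∈ 𝒦, ((cluster · n) ⁻¹' {K} ∩ C) ∩ closeOn K ⁻¹' survivalEvent x n :=
    fun ω ⟨hC, hE⟩ => Set.mem_biUnion (cluster_mem_powerset ω n) ⟨⟨rfl, hC⟩, hE⟩
  have hsplit : P C = ∑ K ∈ 𝒦, P ((cluster · n) ⁻¹' {K} ∩ C) := by
    have hfib K (_ : K ∈ 𝒦) := measurableSet_cluster_preimage n K
    have huniv : (cluster · n) ⁻¹' 𝒦 = Set.univ :=
      Set.preimage_eq_univ_iff.2 (Set.range_subset_iff.2 (cluster_mem_powerset · n))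
    rw [← Measure.restrict_apply_univ, ← huniv, ← sum_measure_preimage_singleton 𝒦 hfib]
    exact Finset.sum_congr rfl fun K hK => Measure.restrict_apply (hfib K hK)
  calc P (C ∩ offClusterSurvival x n)
      ≤ ∑ K ∈ 𝒦, P (((cluster · n) ⁻¹' {K} ∩ C) ∩ closeOn K ⁻¹' survivalEvent x n) :=
        (measure_mono hcover).trans (measure_biUnion_finset_le _ _)
    _ = ∑ K ∈ 𝒦, P ((cluster · n) ⁻¹' {K} ∩ C) * P (closeOn K ⁻¹' survivalEvent x n) :=
        Finset.sum_congr rfl fun K _ => measure_inter_eq_mul_of_dependsOn hP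
          (Finset.disjoint_left.2 fun i hi hi' => by simp_all)
          (dependsOn_mem_cluster_preimage_inter_survivalEvent n K)
          (dependsOn_mem_closeOn_preimage (dependsOn_mem_survivalEvent x n) K)
    _ ≤ ∑ K ∈ 𝒦, P ((cluster · n) ⁻¹' {K} ∩ C) * P (survivalEvent x n) :=
        Finset.sum_le_sum fun K _ => by
          gcongr
          exact fun ω ⟨y, hy⟩ => ⟨y, hy.of_closeOn⟩
    _ = P C * P (survivalEvent x n) := by rw [← Finset.sum_mul, ← hsplit]

lemma cond_offClusterSurvival_le {P : Measure Config}
    (hP : iIndepFun (fun (b : Bond) (ω : Config) => ω b) P) (x : ℤ) (n : ℕ) :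
    P[offClusterSurvival x n | survivalEvent 0 n] ≤ P (survivalEvent x n) := by
  rw [cond_apply (measurableSet_survivalEvent 0 n)]
  calc (P (survivalEvent 0 n))⁻¹ * P (survivalEvent 0 n ∩ offClusterSurvival x n)
      ≤ (P (survivalEvent 0 n))⁻¹ * (P (survivalEvent 0 n) * P (survivalEvent x n)) := by
        gcongr
        exact measure_survivalEvent_inter_offClusterSurvival_le hP x n
    _ ≤ P (survivalEvent x n) := by
        rw [← mul_assoc]
        exact mul_le_of_le_one_left' (ENNReal.inv_mul_le_one _)

lemma exists_mem_xi_zero_of_mem_survivalEvent {ω : Config} {n : ℕ}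
    (hC : ω ∈ survivalEvent 0 n) : ∃ y ∈ xi ω {0} n, -(n : ℤ) ≤ y := by
  obtain ⟨y, hy⟩ := hC
  exact ⟨y, ⟨0, rfl, hy⟩, by linarith [(abs_le.1 hy.abs_sub_le).1]⟩

lemma zeta_inter_Ici_eq_of_top {ω : Config} {A B : Set ℤ} {n : ℕ} {m : ℤ} (hm : 0 ≤ m)
    (hAB : A ⊆ B) (hB : ∀ x ∈ B, x ≤ 0) (hA : (xi ω A n).Nonempty)
    (htop : ∀ y ∈ xi ω B n, sSup (xi ω A n) - m ≤ y → y ∈ xi ω A n) :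
    zeta ω B n ∩ Set.Ici (-m) = zeta ω A n ∩ Set.Ici (-m) :=
  image_sub_csSup_inter_Ici_eq (xi_mono hAB n) hA (bddAbove_xi ω hB n) hm htop

/-- On `{0 → L_n}` the window lies above `-n - 2r`, out of reach in `n` steps from below
`-2 (n + r)`. -/
lemma zeta_inter_Ici_eq_truncate {ω : Config} {n r : ℕ} {A : Set ℤ} (hA0 : 0 ∈ A)
    (hA : ∀ x ∈ A, x ≤ 0) (hC : ω ∈ survivalEvent 0 n) :
    zeta ω A n ∩ Set.Ici (-(2 * r)) =
      zeta ω (A ∩ Set.Ici (-(2 * (n + r)))) n ∩ Set.Ici (-(2 * r)) := by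
  obtain ⟨y₀, ⟨_, rfl, hy₀⟩, hy₀n⟩ := exists_mem_xi_zero_of_mem_survivalEvent hC
  have hy₀' : y₀ ∈ xi ω (A ∩ Set.Ici (-(2 * (n + r)))) n :=
    ⟨0, ⟨hA0, by simp only [Set.mem_Ici]; omega⟩, hy₀⟩
  refine zeta_inter_Ici_eq_of_top (by positivity) Set.inter_subset_left hA ⟨y₀, hy₀'⟩ ?_
  rintro y ⟨x, hx, hxy⟩ hy
  have hsup := le_csSup (bddAbove_xi ω (fun x hx => hA x hx.1) n) hy₀'
  have hxy' := abs_le.1 hxy.abs_sub_le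
  exact ⟨x, ⟨hx, by simp only [Set.mem_Ici]; omega⟩, hxy⟩

/-- A site of `ξ^A_n` in the window but outside `ξ^0_n` is reached by a path avoiding the
cluster (`closeOn_or_exists_mem`), from a starting point at least `-2 (n + r)`. -/
lemma zeta_inter_Ici_eq_of_not_offClusterSurvival {ω : Config} {n r : ℕ} {A : Set ℤ}
    (hA0 : 0 ∈ A) (hA : ∀ x ∈ A, Even x ∧ x ≤ 0) (hC : ω ∈ survivalEvent 0 n)
    (hoff : ∀ i ∈ Finset.Icc 1 (n + r), ω ∉ offClusterSurvival (-2 * i) n) :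
    zeta ω A n ∩ Set.Ici (-(2 * r)) = zeta ω {0} n ∩ Set.Ici (-(2 * r)) := by
  obtain ⟨y₀, hy₀, hy₀n⟩ := exists_mem_xi_zero_of_mem_survivalEvent hC
  refine zeta_inter_Ici_eq_of_top (by positivity) (Set.singleton_subset_iff.2 hA0)
    (fun x hx => (hA x hx).2) ⟨y₀, hy₀⟩ ?_
  rintro y ⟨x, hx, hxy⟩ hy
  rcases hxy.closeOn_or_exists_mem (cluster ω n) with hoffxy | ⟨c, hc, hcy⟩
  · by_cases hx0 : x = 0
    · exact ⟨0, rfl, hx0 ▸ hxy⟩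
    exfalso
    have hsup := le_csSup (bddAbove_xi ω (by simp) n) hy₀
    have hxy' := abs_le.1 hxy.abs_sub_le
    obtain ⟨⟨j, rfl⟩, hj⟩ := hA x hx
    have hi : ((-j).toNat : ℤ) = -j := Int.toNat_of_nonneg (by omega)
    refine hoff (-j).toNat (Finset.mem_Icc.2 ⟨by omega, by omega⟩) ⟨y, ?_⟩
    rwa [hi, show -2 * -j = j + j by ring]
  · exact ⟨0, rfl, (mem_cluster.1 hc).1.trans hcy⟩

lemma cond_zeta_inter_Ici_ne_le {P : Measure Config}
    (hP : iIndepFun (fun (b : Bond) (ω : Config) => ω b) P) {n r : ℕ} {c : ENNReal}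
    (hsurv : ∀ x, P (survivalEvent x n) ≤ c) {A : Set ℤ} (hA0 : 0 ∈ A)
    (hA : ∀ x ∈ A, Even x ∧ x ≤ 0) :
    P[{ω | zeta ω A n ∩ Set.Ici (-(2 * r)) ≠ zeta ω {0} n ∩ Set.Ici (-(2 * r))} |
      survivalEvent 0 n] ≤ (n + r) * c := by
  calc _ ≤ P[⋃ i ∈ Finset.Icc 1 (n + r), offClusterSurvival (-2 * i) n | survivalEvent 0 n] := by
        rw [← cond_inter_self (measurableSet_survivalEvent 0 n)]
        refine measure_mono fun ω ⟨hω, hne⟩ => ?_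
        by_contra hoff
        simp only [Set.mem_iUnion, not_exists] at hoff
        exact hne (zeta_inter_Ici_eq_of_not_offClusterSurvival hA0 hA hω hoff)
    _ ≤ ∑ i ∈ Finset.Icc 1 (n + r), c :=
        (measure_biUnion_finset_le _ _).trans <| Finset.sum_le_sum fun i _ =>
          (cond_offClusterSurvival_le hP _ n).trans (hsurv _)
    _ = (n + r) * c := by simp

lemma apply_eq_of_inter_Ici_eq {f : Set ℤ → ℝ} {r : ℕ}
    (hcyl : ∀ B B' : Set ℤ,
      (∀ z : ℤ, -2 * (r : ℤ) ≤ z → z ≤ -2 → (z ∈ B ↔ z ∈ B')) → f B = f B')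
    {B B' : Set ℤ} (h : B ∩ Set.Ici (-(2 * r)) = B' ∩ Set.Ici (-(2 * r))) : f B = f B' :=
  hcyl B B' fun z hz _ => by simpa [show -(2 * (r : ℤ)) ≤ z by omega] using Set.ext_iff.1 h z

theorem stmt11_general (p : ℝ)
    (P : Measure Config) (hiid : IIDBernoulli P p)
    (β : ℝ)
    (hdecay : ∀ x : ℤ, ∀ n : ℕ,
      P {ω : Config | ∃ y : ℤ, OpenPath ω (x, 0) (y, (n : ℤ))}
        ≤ ENNReal.ofReal (Real.exp (-β * n)))
    (r : ℕ) (f : Set ℤ → ℝ) (M : ℝ) (hM : ∀ B : Set ℤ, |f B| ≤ M)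
    (hcyl : ∀ B B' : Set ℤ,
      (∀ z : ℤ, -2 * (r : ℤ) ≤ z → z ≤ -2 → (z ∈ B ↔ z ∈ B')) → f B = f B')
    (A' : Set ℤ) (hA0 : (0 : ℤ) ∈ A') (hAsub : ∀ z ∈ A', Even z ∧ z ≤ 0)
    (n : ℕ) :
    |(∫ ω, f (zeta ω A' n)
        ∂(P[|{ω : Config | ∃ y : ℤ, OpenPath ω (0, 0) (y, (n : ℤ))}])) -
      (∫ ω, f (zeta ω {0} n)
        ∂(P[|{ω : Config | ∃ y : ℤ, OpenPath ω (0, 0) (y, (n : ℤ))}]))|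
      ≤ 2 * ((n : ℝ) + r) * M * Real.exp (-β * n) := by
  set C := {ω : Config | ∃ y : ℤ, OpenPath ω (0, 0) (y, (n : ℤ))}
  set A := A' ∩ Set.Ici (-(2 * (n + r) : ℤ))
  have hA : A ⊆ Set.Icc (-(2 * (n + r))) 0 := fun x hx => ⟨hx.2, (hAsub x hx.1).2⟩
  have htrunc : ∫ ω, f (zeta ω A' n) ∂P[|C] = ∫ ω, f (zeta ω A n) ∂P[|C] :=
    integral_congr_ae <| (ae_cond_mem (measurableSet_survivalEvent 0 n)).mono fun ω hω =>
      apply_eq_of_inter_Ici_eq hcyl (zeta_inter_Ici_eq_truncate hA0 (fun x hx => (hAsub x hx).2) hω)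
  have hdiff : P[{ω | f (zeta ω A n) ≠ f (zeta ω {0} n)} | C] ≤
      (n + r) * ENNReal.ofReal (Real.exp (-β * n)) :=
    le_trans (measure_mono fun ω hne h => hne (apply_eq_of_inter_Ici_eq hcyl h))
      (cond_zeta_inter_Ici_ne_le hiid.2 (fun x => hdecay x n)
        ⟨hA0, by simp only [Set.mem_Ici]; omega⟩ fun x hx => hAsub x hx.1)
  have hM0 : 0 ≤ M := (abs_nonneg _).trans (hM ∅)
  rw [htrunc]
  calc _ ≤ 2 * M * P[|C].real {ω | f (zeta ω A n) ≠ f (zeta ω {0} n)} :=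
        abs_integral_sub_integral_le (measurable_comp_zeta hA n f)
          (measurable_comp_zeta (lo := 0) (by simp) n f) (fun _ => hM _) (fun _ => hM _)
    _ ≤ 2 * M * ((n + r) * Real.exp (-β * n)) := by
        gcongr
        refine ENNReal.toReal_le_of_le_ofReal (by positivity) (hdiff.trans_eq ?_)
        rw [ENNReal.ofReal_mul (by positivity), ENNReal.ofReal_add (by positivity) (by positivity)]
        simp
    _ = 2 * ((n : ℝ) + r) * M * Real.exp (-β * n) := by ring

/-- Lemma 3.4: assume exponential decay of the single-site survival
probability, `P(ξ^x_n ≠ ∅) ≤ exp (-β n)`.  If `f` is a cylinder function depending only on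
the coordinates `-2r, …, -2` and bounded by `M = ‖f‖`, then for any `A' ⊆ 2ℤ₋` containing
`0`, the conditional expectations of `f (ζ^{A'}_n)` and of `f (ζ^0_n)` given `{0 → L_n}`
differ by at most `2 (n + r) ‖f‖ exp (-β n)`. -/
theorem stmt11 (p : ℝ) (hp0 : 0 < p) (hp1 : p < 1)
    (P : Measure Config) [IsProbabilityMeasure P] (hiid : IIDBernoulli P p)
    (β : ℝ) (hβ : 0 < β)
    (hdecay : ∀ x : ℤ, ∀ n : ℕ,
      P {ω : Config | ∃ y : ℤ, OpenPath ω (x, 0) (y, (n : ℤ))}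
        ≤ ENNReal.ofReal (Real.exp (-β * n)))
    (r : ℕ) (f : Set ℤ → ℝ) (M : ℝ) (hM : ∀ B : Set ℤ, |f B| ≤ M)
    (hcyl : ∀ B B' : Set ℤ,
      (∀ z : ℤ, -2 * (r : ℤ) ≤ z → z ≤ -2 → (z ∈ B ↔ z ∈ B')) → f B = f B')
    (A' : Set ℤ) (hA0 : (0 : ℤ) ∈ A') (hAsub : ∀ z ∈ A', Even z ∧ z ≤ 0)
    (n : ℕ) :
    |(∫ ω, f (zeta ω A' n)
        ∂(P[|{ω : Config | ∃ y : ℤ, OpenPath ω (0, 0) (y, (n : ℤ))}])) -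
      (∫ ω, f (zeta ω {0} n)
        ∂(P[|{ω : Config | ∃ y : ℤ, OpenPath ω (0, 0) (y, (n : ℤ))}]))|
      ≤ 2 * ((n : ℝ) + r) * M * Real.exp (-β * n) :=
  stmt11_general p P hiid β hdecay r f M hM hcyl A' hA0 hAsub n
end
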